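/- arXiv:cond-mat/9805086 — 3 statements merged into one kernel-verified Lean document; each statement's English description precedes it below -/
import Mathlib

section
/- Let A be a 3×3 Hermitian matrix with diagonal entries a, b, c ∈ ℝ and off-diagonal entries A₁₂ = δ, A₁₃ = γ, A₂₃ = ε, where δ, γ, ε are nonzero complex numbers. If A has an eigenvalue λ of multiplicity at least 2, then a − δ̄γ/ε = b − δε/γ = c − γε̄/δ = λ, and in particular these three quantities are equal and real. -/
/-!
A Hermitian matrix is unitarily diagonalisable, so if `λ` is a root of multiplicity `n - 1` of
the characteristic polynomial of an `n × n` Hermitian matrix `A`, all eigenvalues but one equal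
`λ` and `A - λ` is a rank-one matrix `(d - λ) u u*`. Its `2 × 2` minors therefore vanish; three of
them read `(a - λ) ε = δ̄ γ`, `(b - λ) γ = δ ε` and `(c - λ) δ = γ ε̄`. Finally `λ` is real, being
an eigenvalue of a Hermitian matrix.
-/

open Polynomial Matrix Complex
open scoped Finset

theorem exists_forall_ne_eq_of_pow_dvd_prod_X_sub_C {R ι : Type*} [CommRing R] [IsDomain R]
    [Fintype ι] [Nonempty ι] (d : ι → R) (μ : R)
    (h : (X - C μ) ^ (Fintype.card ι - 1) ∣ ∏ i, (X - C (d i))) :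
    ∃ k, ∀ i ≠ k, d i = μ := by
  classical
  have hprod : ∏ i, (X - C (d i)) = ((Finset.univ.val.map d).map fun a => X - C a).prod := by
    rw [Multiset.map_map, Finset.prod_eq_multiset_prod]; rfl
  have hcount : Fintype.card ι - 1 ≤ #{i | μ = d i} := by
    have hmonic := monic_multiset_prod_of_monic _ _ fun a (_ : a ∈ Finset.univ.val.map d) =>
      monic_X_sub_C a
    rwa [hprod, ← le_rootMultiplicity_iff hmonic.ne_zero, ← count_roots,
      roots_multiset_prod_X_sub_C, Multiset.count_map] at h
  have hrest : #{i | ¬ μ = d i} ≤ 1 := by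
    have := Finset.card_filter_add_card_filter_not (s := Finset.univ) (fun i => μ = d i)
    rw [Finset.card_univ] at this
    have := Fintype.card_pos (α := ι)
    omega
  obtain ⟨k, hk⟩ := Finset.card_le_one_iff_subset_singleton.mp hrest
  refine ⟨k, fun i hi => ?_⟩
  by_contra hne
  exact hi (Finset.mem_singleton.mp (hk (by simp [Ne.symm hne])))

theorem Matrix.mul_diagonal_mul_star_sub_smul_one {R n : Type*} [CommRing R] [StarRing R]
    [Fintype n] [DecidableEq n] (U : Matrix n n R) (hU : U * star U = 1) (d : n → R) (μ : R)
    (k : n) (hd : ∀ i ≠ k, d i = μ) :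
    U * diagonal d * star U - μ • 1 =
      (d k - μ) • vecMulVec (fun p => U p k) (fun q => star (U q k)) := by
  have hsplit : diagonal d = μ • 1 + diagonal (Pi.single k (d k - μ)) := by
    ext i j
    rcases eq_or_ne i j with rfl | hij
    · rcases eq_or_ne i k with rfl | hik
      · simp
      · simp [hik, hd i hik]
    · simp [hij]
  rw [hsplit, mul_add, add_mul, mul_smul_comm, mul_one, smul_mul_assoc, hU, add_sub_cancel_left]
  ext p q
  simp only [mul_apply (M := U * _), mul_diagonal, Pi.single_apply, mul_ite, mul_zero, ite_mul,
    zero_mul, Finset.sum_ite_eq', Finset.mem_univ, ↓reduceIte, smul_apply, vecMulVec_apply,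
    star_apply, smul_eq_mul]
  ring

theorem Matrix.vecMulVec_apply_mul_apply_comm {α m n : Type*} [CommSemigroup α]
    (u : m → α) (v : n → α) (i i' : m) (j j' : n) :
    vecMulVec u v i j * vecMulVec u v i' j' = vecMulVec u v i j' * vecMulVec u v i' j := by
  simp only [vecMulVec_apply]
  ac_rfl

section
variable {𝕜 n : Type*} [RCLike 𝕜] [Fintype n] [DecidableEq n] {A : Matrix n n 𝕜}

theorem Matrix.IsHermitian.im_eq_zero_of_isRoot_charpoly (hA : A.IsHermitian) {μ : 𝕜}
    (h : A.charpoly.IsRoot μ) : RCLike.im μ = 0 := by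
  have hμ : μ ∈ A.charpoly.roots := (mem_roots (charpoly_monic A).ne_zero).mpr h
  rw [hA.roots_charpoly_eq_eigenvalues] at hμ
  obtain ⟨i, -, rfl⟩ := Multiset.mem_map.mp hμ
  simp

theorem Matrix.IsHermitian.exists_sub_smul_one_eq_vecMulVec [Nonempty n] (hA : A.IsHermitian)
    {μ : 𝕜} (h : (X - C μ) ^ (Fintype.card n - 1) ∣ A.charpoly) :
    ∃ u v : n → 𝕜, A - μ • 1 = vecMulVec u v := by
  obtain ⟨U, d, hU, hAU, hchar⟩ : ∃ (U : Matrix n n 𝕜) (d : n → 𝕜), U * star U = 1 ∧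
      A = U * diagonal d * star U ∧ A.charpoly = ∏ i, (X - C (d i)) :=
    ⟨_, _, Unitary.coe_mul_star_self _, hA.spectral_theorem, hA.charpoly_eq⟩
  rw [hchar] at h
  obtain ⟨k, hk⟩ := exists_forall_ne_eq_of_pow_dvd_prod_X_sub_C d μ h
  refine ⟨(d k - μ) • fun p => U p k, fun q => star (U q k), ?_⟩
  rw [hAU, mul_diagonal_mul_star_sub_smul_one U hU _ μ k hk, smul_vecMulVec]

end

/-- If the 3×3 Hermitian matrix `[[a, δ, γ],[δ̄, b, ε],[γ̄, ε̄, c]]` (with `a,b,c` real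
and `δ,γ,ε` nonzero complex) has an eigenvalue `λ` of multiplicity at least 2, then
`a − δ̄γ/ε = b − δε/γ = c − γε̄/δ = λ`. -/
theorem stmt0 (a b c : ℝ) (δ γ ε : ℂ) (hδ : δ ≠ 0) (hγ : γ ≠ 0) (hε : ε ≠ 0)
    (A : Matrix (Fin 3) (Fin 3) ℂ)
    (hA : A = !![(a : ℂ), δ, γ; starRingEnd ℂ δ, (b : ℂ), ε;
                 starRingEnd ℂ γ, starRingEnd ℂ ε, (c : ℂ)])
    (lam : ℂ) (hmult : (X - C lam) ^ 2 ∣ A.charpoly) :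
    (a : ℂ) - starRingEnd ℂ δ * γ / ε = lam ∧
    (b : ℂ) - δ * ε / γ = lam ∧
    (c : ℂ) - γ * starRingEnd ℂ ε / δ = lam ∧ lam.im = 0 := by
  have hherm : A.IsHermitian := by
    subst hA
    ext i j
    fin_cases i <;> fin_cases j <;> simp
  obtain ⟨u, v, huv⟩ :=
    hherm.exists_sub_smul_one_eq_vecMulVec (μ := lam) (by simpa using hmult)
  have minor (i i' j j' : Fin 3) := vecMulVec_apply_mul_apply_comm u v i i' j j'
  simp only [← huv, hA] at minor
  have h₁ := minor 0 1 0 2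
  have h₂ := minor 1 0 1 2
  have h₃ := minor 2 0 2 1
  simp only [Fin.isValue, Matrix.sub_apply, of_apply, cons_val', cons_val_zero, cons_val_fin_one,
    Matrix.smul_apply, one_apply_eq, smul_eq_mul, mul_one, cons_val, cons_val_one, ne_eq,
    Fin.reduceEq, not_false_eq_true, one_apply_ne, mul_zero, sub_zero, one_ne_zero,
    zero_ne_one] at h₁ h₂ h₃
  refine ⟨?_, ?_, ?_, ?_⟩
  · field_simp
    linear_combination h₁
  · field_simp
    linear_combination h₂
  · field_simp
    linear_combination h₃
  · exact hherm.im_eq_zero_of_isRoot_charpoly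
      (dvd_iff_isRoot.mp ((dvd_pow_self _ two_ne_zero).trans hmult))
end

section
/- Let A be a 3×3 Hermitian matrix with diagonal entries a, b, c ∈ ℝ and off-diagonal entries A₁₂ = δ, A₁₃ = γ, A₂₃ = ε, where δ, γ, ε are nonzero complex numbers. If there is a real number λ with a − δ̄γ/ε = b − δε/γ = c − γε̄/δ = λ, then λ is an eigenvalue of A of multiplicity at least 2. -/
open Polynomial Matrix Complex

/-!
The hypotheses say that the off-diagonal 2×2 minors of `A - λ` vanish; together with the
nonvanishing of `δ, γ, ε` this forces `A - λ` to have rank one, i.e. to be an outer product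
`u vᵀ`. The characteristic polynomial of an `n × n` outer product is `Xⁿ - (v ⬝ u) Xⁿ⁻¹`, so
shifting back by `λ` gives the factor `(X - λ)²`.
-/

open ComplexConjugate

namespace Matrix

variable {n R : Type*} [Fintype n] [DecidableEq n] [CommRing R]

theorem charpoly_eq_comp_sub_scalar (A : Matrix n n R) (μ : R) :
    A.charpoly = (A - scalar n μ).charpoly.comp (X - C μ) := by
  rw [charpoly_sub_scalar, comp_assoc]
  simp

theorem pow_dvd_charpoly_of_sub_scalar_eq_vecMulVec {A : Matrix n n R} {μ : R} {u v : n → R}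
    (h : A - scalar n μ = vecMulVec u v) :
    (X - C μ) ^ (Fintype.card n - 1) ∣ A.charpoly := by
  obtain ⟨q, hq⟩ : X ^ (Fintype.card n - 1) ∣ (vecMulVec u v).charpoly := by
    rw [charpoly_vecMulVec, smul_eq_C_mul]
    exact dvd_sub (pow_dvd_pow X (Nat.sub_le _ 1)) (dvd_mul_left _ _)
  rw [charpoly_eq_comp_sub_scalar A μ, h, hq, mul_comp, X_pow_comp]
  exact dvd_mul_right _ _

end Matrix

theorem hermitian_fin_three_eq_vecMulVec {α β κ : ℝ} {δ γ ε : ℂ} (hδ : δ ≠ 0) (hγ : γ ≠ 0)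
    (h₁ : conj δ * γ = α * ε) (h₂ : δ * ε = β * γ) (h₃ : γ * conj ε = κ * δ) :
    !![(α : ℂ), δ, γ; conj δ, β, ε; conj γ, conj ε, κ] =
      vecMulVec ![(α : ℂ), conj δ, conj γ] ![1, δ / α, γ / α] := by
  have hδγ : conj δ * γ ≠ 0 := mul_ne_zero ((_root_.map_ne_zero conj).2 hδ) hγ
  have hα : (α : ℂ) ≠ 0 := fun hα ↦ hδγ (by rw [h₁, hα, zero_mul])
  have hε : ε ≠ 0 := fun hε ↦ hδγ (by rw [h₁, hε, mul_zero])
  have h₁' : conj γ * δ = α * conj ε := by simpa [mul_comm] using congrArg conj h₁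
  have hδδ : conj δ * δ = α * β := by
    apply mul_right_cancel₀ (mul_ne_zero hγ hε)
    linear_combination δ * ε * h₁ + α * ε * h₂
  have hγγ : conj γ * γ = α * κ := by
    apply mul_right_cancel₀ ((_root_.map_ne_zero conj).2 hε)
    linear_combination conj γ * h₃ + κ * h₁'
  ext i j
  fin_cases i <;> fin_cases j <;> simp [vecMulVec_apply] <;> field_simp <;> grind

/-- Converse: if `a − δ̄γ/ε = b − δε/γ = c − γε̄/δ = λ` with `λ` real, then `λ` is an
eigenvalue of multiplicity at least 2 of the Hermitian matrix
`[[a, δ, γ],[δ̄, b, ε],[γ̄, ε̄, c]]`. -/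
theorem stmt1 (a b c : ℝ) (δ γ ε : ℂ) (hδ : δ ≠ 0) (hγ : γ ≠ 0) (hε : ε ≠ 0)
    (A : Matrix (Fin 3) (Fin 3) ℂ)
    (hA : A = !![(a : ℂ), δ, γ; starRingEnd ℂ δ, (b : ℂ), ε;
                 starRingEnd ℂ γ, starRingEnd ℂ ε, (c : ℂ)])
    (lam : ℝ)
    (h1 : (a : ℂ) - starRingEnd ℂ δ * γ / ε = (lam : ℂ))
    (h2 : (b : ℂ) - δ * ε / γ = (lam : ℂ))
    (h3 : (c : ℂ) - γ * starRingEnd ℂ ε / δ = (lam : ℂ)) :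
    (X - C (lam : ℂ)) ^ 2 ∣ A.charpoly := by
  have h₁ : conj δ * γ = ((a - lam : ℝ) : ℂ) * ε := by
    field_simp at h1; push_cast; linear_combination -h1
  have h₂ : δ * ε = ((b - lam : ℝ) : ℂ) * γ := by
    field_simp at h2; push_cast; linear_combination -h2
  have h₃ : γ * conj ε = ((c - lam : ℝ) : ℂ) * δ := by
    field_simp at h3; push_cast; linear_combination -h3
  have hshift : A - scalar (Fin 3) (lam : ℂ) =
      !![((a - lam : ℝ) : ℂ), δ, γ; conj δ, ((b - lam : ℝ) : ℂ), ε;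
        conj γ, conj ε, ((c - lam : ℝ) : ℂ)] := by
    subst hA
    ext i j
    fin_cases i <;> fin_cases j <;> simp
  exact pow_dvd_charpoly_of_sub_scalar_eq_vecMulVec
    (hshift.trans (hermitian_fin_three_eq_vecMulVec hδ hγ h₁ h₂ h₃))
end

section
/- Let A be a 3×3 Hermitian matrix as above with a doubly degenerate eigenvalue λ satisfying a − δ̄γ/ε = b − δε/γ = c − γε̄/δ = λ. Then the third eigenvalue is λ' = tr(A) − 2λ, and λ' > λ if and only if Re(δ·ε·γ̄) > 0. -/
/-!
With `t = a - λ`, `u = b - λ`, `v = c - λ` the hypotheses read `δε = uγ`, `γε̄ = vδ`, `δ̄γ = tε`,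
which are cyclic in `(δ, ε, γ̄)` and force `|δ|² = tu`, `|ε|² = uv`, `|γ|² = tv`, `δεγ̄ = tuv`.
So every principal minor of `A - λ` of size 2 or 3 vanishes, and the characteristic polynomial is
`(X - λ)²(X - λ - (t + u + v))`. As `tu` and `uv` are positive, `t, u, v` share a sign, whence
`t + u + v > 0 ↔ tuv > 0`.
-/

open Polynomial Matrix Complex
open scoped ComplexConjugate

lemma mul_eq_sub_mul_of_sub_div_eq {K : Type*} [Field K] {a l w z : K} (hz : z ≠ 0)
    (h : a - w / z = l) : w = (a - l) * z := by
  rw [← h]; field_simp; ring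

lemma normSq_eq_of_mul_eq_conj {x y z : ℂ} {t u : ℝ} (hy : y ≠ 0)
    (hxy : x * y = u * conj z) (hzx : z * x = t * conj y) : normSq x = t * u := by
  have hzx' : conj z * conj x = t * y := by simpa using congrArg conj hzx
  have key : (normSq x : ℂ) * y = (t * u : ℝ) * y := by
    -- `x x̄ y = u x̄ z̄ = u · conj (z x) = t u y`
    rw [← mul_conj]; push_cast
    linear_combination conj x * hxy + u * hzx'
  exact_mod_cast mul_right_cancel₀ hy key

lemma charpoly_hermitian_fin_three (a b c : ℝ) (δ γ ε : ℂ) :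
    (!![(a : ℂ), δ, γ; conj δ, b, ε; conj γ, conj ε, c]).charpoly =
      X ^ 3 - C ((a + b + c : ℝ) : ℂ) * X ^ 2
        + C ((a * b + b * c + a * c - normSq δ - normSq ε - normSq γ : ℝ) : ℂ) * X
        - C ((a * b * c + 2 * (δ * ε * conj γ).re
              - a * normSq ε - b * normSq γ - c * normSq δ : ℝ) : ℂ) := by
  have hσ : ((a * b + b * c + a * c - normSq δ - normSq ε - normSq γ : ℝ) : ℂ) =
      a * b + b * c + a * c - δ * conj δ - ε * conj ε - γ * conj γ := by
    push_cast [mul_conj]; rfl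
  have hdet : ((a * b * c + 2 * (δ * ε * conj γ).re
        - a * normSq ε - b * normSq γ - c * normSq δ : ℝ) : ℂ) =
      a * b * c + δ * ε * conj γ + conj δ * conj ε * γ
        - a * (ε * conj ε) - b * (γ * conj γ) - c * (δ * conj δ) := by
    push_cast [mul_conj, re_eq_add_conj, map_mul, conj_conj]; ring
  rw [hσ, hdet, charpoly, det_fin_three]
  simp
  ring

lemma add_pos_iff_mul_pos_of_mul_pos {t u v : ℝ} (htu : 0 < t * u) (huv : 0 < u * v) :
    0 < t + u + v ↔ 0 < t * u * v := by
  rcases lt_or_gt_of_ne (right_ne_zero_of_mul htu.ne') with hu | hu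
  · have ht : t < 0 := neg_of_mul_pos_left htu hu.le
    have hv : v < 0 := neg_of_mul_pos_right huv hu.le
    constructor <;> intro h <;> nlinarith
  · have ht : 0 < t := pos_of_mul_pos_left htu hu.le
    have hv : 0 < v := pos_of_mul_pos_right huv hu.le
    exact iff_of_true (by linarith) (by positivity)

/-- If the Hermitian matrix `[[a, δ, γ],[δ̄, b, ε],[γ̄, ε̄, c]]` has a doubly degenerate
eigenvalue `λ` satisfying `a − δ̄γ/ε = b − δε/γ = c − γε̄/δ = λ`, then the third
eigenvalue is `λ' = tr(A) − 2λ` (i.e. the characteristic polynomial is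
`(X − λ)²(X − λ')`), and `λ' > λ` iff `Re(δ·ε·γ̄) > 0`. -/
theorem stmt2 (a b c : ℝ) (δ γ ε : ℂ) (hδ : δ ≠ 0) (hγ : γ ≠ 0) (hε : ε ≠ 0)
    (A : Matrix (Fin 3) (Fin 3) ℂ)
    (hA : A = !![(a : ℂ), δ, γ; starRingEnd ℂ δ, (b : ℂ), ε;
                 starRingEnd ℂ γ, starRingEnd ℂ ε, (c : ℂ)])
    (lam : ℝ)
    (h1 : (a : ℂ) - starRingEnd ℂ δ * γ / ε = (lam : ℂ))
    (h2 : (b : ℂ) - δ * ε / γ = (lam : ℂ))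
    (h3 : (c : ℂ) - γ * starRingEnd ℂ ε / δ = (lam : ℂ))
    (lam' : ℝ) (hlam' : lam' = a + b + c - 2 * lam) :
    A.charpoly = (X - C (lam : ℂ)) ^ 2 * (X - C (lam' : ℂ)) ∧
    (lam' > lam ↔ 0 < (δ * ε * starRingEnd ℂ γ).re) := by
  have r₁ : δ * ε = ((b - lam : ℝ) : ℂ) * conj (conj γ) := by
    push_cast; rw [conj_conj]; exact mul_eq_sub_mul_of_sub_div_eq hγ h2
  have r₂ : ε * conj γ = ((c - lam : ℝ) : ℂ) * conj δ := by
    simpa [mul_comm] using congrArg conj (mul_eq_sub_mul_of_sub_div_eq hδ h3)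
  have r₃ : conj γ * δ = ((a - lam : ℝ) : ℂ) * conj ε := by
    simpa [mul_comm] using congrArg conj (mul_eq_sub_mul_of_sub_div_eq hε h1)
  have nδ := normSq_eq_of_mul_eq_conj hε r₁ r₃
  have nε := normSq_eq_of_mul_eq_conj ((_root_.map_ne_zero _).2 hγ) r₂ r₁
  have nγ : normSq γ = (c - lam) * (a - lam) := by
    simpa using normSq_eq_of_mul_eq_conj hδ r₃ r₂
  have hre : (δ * ε * conj γ).re = (a - lam) * (b - lam) * (c - lam) := by
    rw [r₁, mul_assoc, conj_conj, mul_conj, nγ]; simp; ring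
  subst hA hlam'
  refine ⟨?_, ?_⟩
  · rw [charpoly_hermitian_fin_three, nδ, nε, nγ, hre]
    simp only [ofReal_sub, ofReal_add, ofReal_mul, ofReal_ofNat, map_sub, map_add, map_mul,
      map_ofNat]
    ring
  · rw [hre, ← add_pos_iff_mul_pos_of_mul_pos (nδ ▸ normSq_pos.2 hδ) (nε ▸ normSq_pos.2 hε)]
    constructor <;> intro h <;> linarith
end
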